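/- arXiv:1604.02184 — 4 statements merged into one kernel-verified Lean document; each statement's English description precedes it below -/
import Mathlib

section
/- Let T = 2 and L = ℓ = 1, and let P2 be the set of all (x1,x2,y1,y2,u2) ∈ ℝ^2 × {0,1}^2 × {0,1} with x1,x2 ≥ 0 satisfying: u2 ≤ y2; y1 + u2 ≤ 1; y2 − y1 ≤ u2; Cmin·y_t ≤ x_t ≤ Cmax·y_t for t = 1,2; x2 − x1 ≤ V·y1 + W·(1−y1); and x1 − x2 ≤ V·y2 + W·(1−y2). Define Q2 ⊆ ℝ^5 by the inequalities: u2 ≥ 0; u2 ≥ y2 − y1; u2 ≤ y2; y1 + u2 ≤ 1; x1 ≥ Cmin·y1; x2 ≥ Cmin·y2; x1 ≤ W·y1 + (Cmax−W)·(y2−u2); x2 ≤ Cmax·y2 − (Cmax−W)·u2; x2 − x1 ≤ (Cmin+V)·y2 − Cmin·y1 − (Cmin+V−W)·u2; and x1 − x2 ≤ W·y1 − (W−V)·y2 − (Cmin+V−W)·u2; and define Q̄2 ⊆ ℝ^5 by the first eight of these inequalities (omitting the last two). Then: if Cmax − Cmin − V ≥ 0, the convex hull of P2 equals Q2; and if Cmax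 − Cmin − V < 0, the convex hull of P2 equals Q̄2. -/
noncomputable section

open Set

/-- Coordinates of `z : Fin 5 → ℝ`:
`z 0 = x1`, `z 1 = x2`, `z 2 = y1`, `z 3 = y2`, `z 4 = u2`. -/
def P2 (Cmin Cmax V W : ℝ) : Set (Fin 5 → ℝ) :=
  {z | (z 2 = 0 ∨ z 2 = 1) ∧ (z 3 = 0 ∨ z 3 = 1) ∧ (z 4 = 0 ∨ z 4 = 1) ∧
       0 ≤ z 0 ∧ 0 ≤ z 1 ∧
       z 4 ≤ z 3 ∧ z 2 + z 4 ≤ 1 ∧ z 3 - z 2 ≤ z 4 ∧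
       Cmin * z 2 ≤ z 0 ∧ z 0 ≤ Cmax * z 2 ∧
       Cmin * z 3 ≤ z 1 ∧ z 1 ≤ Cmax * z 3 ∧
       z 1 - z 0 ≤ V * z 2 + W * (1 - z 2) ∧
       z 0 - z 1 ≤ V * z 3 + W * (1 - z 3)}

/-- The two-period polyhedron `Q2`. -/
def Q2 (Cmin Cmax V W : ℝ) : Set (Fin 5 → ℝ) :=
  {z | 0 ≤ z 4 ∧ z 3 - z 2 ≤ z 4 ∧
       z 4 ≤ z 3 ∧ z 2 + z 4 ≤ 1 ∧
       Cmin * z 2 ≤ z 0 ∧ Cmin * z 3 ≤ z 1 ∧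
       z 0 ≤ W * z 2 + (Cmax - W) * (z 3 - z 4) ∧
       z 1 ≤ Cmax * z 3 - (Cmax - W) * z 4 ∧
       z 1 - z 0 ≤ (Cmin + V) * z 3 - Cmin * z 2 - (Cmin + V - W) * z 4 ∧
       z 0 - z 1 ≤ W * z 2 - (W - V) * z 3 - (Cmin + V - W) * z 4}

/-- The two-period polyhedron `Q̄2` (the first eight inequalities of `Q2`). -/
def Q2bar (Cmin Cmax V W : ℝ) : Set (Fin 5 → ℝ) :=
  {z | 0 ≤ z 4 ∧ z 3 - z 2 ≤ z 4 ∧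
       z 4 ≤ z 3 ∧ z 2 + z 4 ≤ 1 ∧
       Cmin * z 2 ≤ z 0 ∧ Cmin * z 3 ≤ z 1 ∧
       z 0 ≤ W * z 2 + (Cmax - W) * (z 3 - z 4) ∧
       z 1 ≤ Cmax * z 3 - (Cmax - W) * z 4}

/-!
Up to the on/off pattern `(y1, y2, u2)`, a point of `P2` is of one of four kinds: off in both
periods (`0`), starting up in period 2 (`(0, b, 0, 1, 1)`, `b ∈ [Cmin, W]`), shutting down after
period 1 (`(a, 0, 1, 0, 0)`, `a ∈ [Cmin, W]`), or on in both periods (`(c, d, 1, 1, 0)` with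
`c, d ∈ [Cmin, Cmax]`, `|c - d| ≤ V`). A point `z` of `Q2` is written as a convex combination of
one point of each kind, with weights `1 - y1 - u2`, `u2`, `y1 - y2 + u2`, `y2 - u2` forced by
the binary coordinates. Writing `C = (y2 - u2) c` and `D = (y2 - u2) d`, the remaining freedom is
to choose `C` and `D` in two intervals cut out by the bounds of `Q2` and within `(y2 - u2) V` of
each other; the two ramping inequalities of `Q2` say exactly that this is possible. When
`Cmax - Cmin - V < 0` those two inequalities follow from the bound inequalities, so `Q2 = Q̄2`.
-/

lemma exists_mem_Icc_abs_sub_le {lI hI lJ hJ r : ℝ} (hr : 0 ≤ r) (hIne : lI ≤ hI)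
    (hJne : lJ ≤ hJ) (hJI : lJ ≤ hI + r) (hIJ : lI ≤ hJ + r) :
    ∃ c ∈ Icc lI hI, ∃ d ∈ Icc lJ hJ, |c - d| ≤ r := by
  refine ⟨max lI (lJ - r), ⟨le_max_left _ _, max_le hIne (by linarith)⟩,
    max lJ (max lI (lJ - r) - r), ⟨le_max_left _ _, max_le hJne ?_⟩, abs_sub_le_iff.2 ⟨?_, ?_⟩⟩
  · rcases max_cases lI (lJ - r) with ⟨h, -⟩ | ⟨h, -⟩ <;> rw [h] <;> linarith
  · linarith [le_max_right lJ (max lI (lJ - r) - r)]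
  · rcases max_cases lJ (max lI (lJ - r) - r) with ⟨h, -⟩ | ⟨h, -⟩ <;> rw [h]
    · linarith [le_max_right lI (lJ - r)]
    · linarith

lemma exists_mem_Icc_mul_eq {μ lo hi q : ℝ} (hμ : 0 ≤ μ) (hlo : lo ≤ hi)
    (hq : q ∈ Icc (μ * lo) (μ * hi)) : ∃ a ∈ Icc lo hi, μ * a = q := by
  rwa [← image_mul_left_Icc hμ hlo] at hq

lemma exists_mem_Icc_abs_sub_le_of_mul {μ lo hi r p q : ℝ} (hμ : 0 ≤ μ) (hlo : lo ≤ hi)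
    (hr : 0 ≤ r) (hp : p ∈ Icc (μ * lo) (μ * hi)) (hq : q ∈ Icc (μ * lo) (μ * hi))
    (hpq : |p - q| ≤ μ * r) :
    ∃ c ∈ Icc lo hi, ∃ d ∈ Icc lo hi, |c - d| ≤ r ∧ μ * c = p ∧ μ * d = q := by
  obtain ⟨c, hc, rfl⟩ := exists_mem_Icc_mul_eq hμ hlo hp
  obtain ⟨d, hd, rfl⟩ := exists_mem_Icc_mul_eq hμ hlo hq
  rcases hμ.eq_or_lt with rfl | hμ
  · exact ⟨lo, left_mem_Icc.2 hlo, lo, left_mem_Icc.2 hlo, by simpa using hr, by simp, by simp⟩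
  · refine ⟨c, hc, d, hd, ?_, rfl, rfl⟩
    rwa [← mul_sub, abs_mul, abs_of_pos hμ, mul_le_mul_iff_right₀ hμ] at hpq

lemma add_four_smul_mem_convexHull {E : Type*} [AddCommGroup E] [Module ℝ E] {s : Set E}
    {x₁ x₂ x₃ x₄ : E} {w₁ w₂ w₃ w₄ : ℝ} (h₁ : x₁ ∈ s) (h₂ : x₂ ∈ s) (h₃ : x₃ ∈ s) (h₄ : x₄ ∈ s)
    (hw₁ : 0 ≤ w₁) (hw₂ : 0 ≤ w₂) (hw₃ : 0 ≤ w₃) (hw₄ : 0 ≤ w₄) (hw : w₁ + w₂ + w₃ + w₄ = 1) :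
    w₁ • x₁ + w₂ • x₂ + w₃ • x₃ + w₄ • x₄ ∈ convexHull ℝ s := by
  have := (convex_convexHull ℝ s).sum_mem (t := Finset.univ) (w := ![w₁, w₂, w₃, w₄])
    (z := ![x₁, x₂, x₃, x₄]) (by intro i _; fin_cases i <;> assumption)
    (by simpa [Fin.sum_univ_four] using hw)
    (by intro i _; fin_cases i <;> exact subset_convexHull ℝ s ‹_›)
  simpa [Fin.sum_univ_four, add_assoc] using this

section Polyhedra

variable {Cmin Cmax V W : ℝ}

lemma P2_subset_Q2 : P2 Cmin Cmax V W ⊆ Q2 Cmin Cmax V W := by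
  rintro z ⟨h2, h3, h4, -, -, hu, hyu, hyy, hl1, hu1, hl2, hu2, hr1, hr2⟩
  simp only [Q2, mem_ofPred_eq]
  rcases h2 with h2 | h2 <;> rcases h3 with h3 | h3 <;> rcases h4 with h4 | h4 <;>
    simp only [h2, h3, h4] at * <;> norm_num at * <;> and_intros <;> linarith

lemma convex_Q2 : Convex ℝ (Q2 Cmin Cmax V W) := by
  intro x hx y hy s t hs ht hst
  obtain rfl : t = 1 - s := by linarith
  obtain ⟨p1, p2, p3, p4, p5, p6, p7, p8, p9, p10⟩ := hx
  obtain ⟨r1, r2, r3, r4, r5, r6, r7, r8, r9, r10⟩ := hy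
  simp only [Q2, mem_ofPred_eq, Pi.add_apply, Pi.smul_apply, smul_eq_mul]
  exact ⟨by linear_combination s * p1 + (1 - s) * r1, by linear_combination s * p2 + (1 - s) * r2,
    by linear_combination s * p3 + (1 - s) * r3, by linear_combination s * p4 + (1 - s) * r4,
    by linear_combination s * p5 + (1 - s) * r5, by linear_combination s * p6 + (1 - s) * r6,
    by linear_combination s * p7 + (1 - s) * r7, by linear_combination s * p8 + (1 - s) * r8,
    by linear_combination s * p9 + (1 - s) * r9, by linear_combination s * p10 + (1 - s) * r10⟩

lemma zero_mem_P2 (hW : 0 ≤ W) : (0 : Fin 5 → ℝ) ∈ P2 Cmin Cmax V W := by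
  simp [P2, hW]

lemma startup_mem_P2 {b : ℝ} (hV : 0 ≤ V) (hC0 : 0 ≤ Cmin) (hWC : W ≤ Cmax)
    (hb : b ∈ Icc Cmin W) : ![0, b, 0, 1, 1] ∈ P2 Cmin Cmax V W := by
  obtain ⟨hb1, hb2⟩ := hb
  simp only [P2, mem_ofPred_eq, Matrix.cons_val, Matrix.cons_val_zero, Matrix.cons_val_one]
  and_intros <;> norm_num <;> linarith

lemma shutdown_mem_P2 {a : ℝ} (hV : 0 ≤ V) (hC0 : 0 ≤ Cmin) (hWC : W ≤ Cmax)
    (ha : a ∈ Icc Cmin W) : ![a, 0, 1, 0, 0] ∈ P2 Cmin Cmax V W := by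
  obtain ⟨ha1, ha2⟩ := ha
  simp only [P2, mem_ofPred_eq, Matrix.cons_val, Matrix.cons_val_zero, Matrix.cons_val_one]
  and_intros <;> norm_num <;> linarith

lemma online_mem_P2 {c d : ℝ} (hC0 : 0 ≤ Cmin) (hc : c ∈ Icc Cmin Cmax) (hd : d ∈ Icc Cmin Cmax)
    (hcd : |c - d| ≤ V) : ![c, d, 1, 1, 0] ∈ P2 Cmin Cmax V W := by
  obtain ⟨hc1, hc2⟩ := hc
  obtain ⟨hd1, hd2⟩ := hd
  obtain ⟨h1, h2⟩ := abs_sub_le_iff.1 hcd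
  simp only [P2, mem_ofPred_eq, Matrix.cons_val, Matrix.cons_val_zero, Matrix.cons_val_one]
  and_intros <;> norm_num <;> linarith

lemma Q2_subset_convexHull_P2 (hV : 0 ≤ V) (hC0 : 0 ≤ Cmin) (hCW : Cmin ≤ W) (hWC : W ≤ Cmax) :
    Q2 Cmin Cmax V W ⊆ convexHull ℝ (P2 Cmin Cmax V W) := by
  rintro z ⟨q1, q2, q3, q4, q5, q6, q7, q8, q9, q10⟩
  set μB := z 4
  set μC := z 2 - z 3 + z 4
  set μD := z 3 - z 4
  have hμC : 0 ≤ μC := by linarith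
  have hμD : 0 ≤ μD := by linarith
  have hCmax : Cmin ≤ Cmax := hCW.trans hWC
  have hμDC : μD * Cmin ≤ μD * Cmax := mul_le_mul_of_nonneg_left hCmax hμD
  obtain ⟨C, hC, D, hD, hCD⟩ := exists_mem_Icc_abs_sub_le (mul_nonneg hμD hV)
    (lI := max (μD * Cmin) (z 0 - μC * W)) (hI := min (μD * Cmax) (z 0 - μC * Cmin))
    (lJ := max (μD * Cmin) (z 1 - μB * W)) (hJ := min (μD * Cmax) (z 1 - μB * Cmin))
    (by simp only [max_le_iff, le_min_iff]; refine ⟨⟨?_, ?_⟩, ?_, ?_⟩ <;>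
          linarith [mul_le_mul_of_nonneg_left hCW hμC])
    (by simp only [max_le_iff, le_min_iff]; refine ⟨⟨?_, ?_⟩, ?_, ?_⟩ <;>
          linarith [mul_le_mul_of_nonneg_left hCW q1])
    (by rw [← min_add_add_right]; simp only [max_le_iff, le_min_iff]
        refine ⟨⟨?_, ?_⟩, ?_, ?_⟩ <;> linarith [mul_nonneg hμD hV])
    (by rw [← min_add_add_right]; simp only [max_le_iff, le_min_iff]
        refine ⟨⟨?_, ?_⟩, ?_, ?_⟩ <;> linarith [mul_nonneg hμD hV])
  simp only [mem_Icc, max_le_iff, le_min_iff] at hC hD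
  obtain ⟨a, ha, hμCa⟩ := exists_mem_Icc_mul_eq (q := z 0 - C) hμC hCW ⟨by linarith, by linarith⟩
  obtain ⟨b, hb, hμBb⟩ := exists_mem_Icc_mul_eq (q := z 1 - D) q1 hCW ⟨by linarith, by linarith⟩
  obtain ⟨c, hc, d, hd, hcd, rfl, rfl⟩ :=
    exists_mem_Icc_abs_sub_le_of_mul hμD hCmax hV ⟨hC.1.1, hC.2.1⟩ ⟨hD.1.1, hD.2.1⟩ hCD
  have hz : z = (1 - z 2 - z 4) • 0 + μB • ![0, b, 0, 1, 1] + μC • ![a, 0, 1, 0, 0] +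
      μD • ![c, d, 1, 1, 0] := by
    ext i
    fin_cases i <;>
      simp only [Fin.zero_eta, Fin.mk_one, Fin.reduceFinMk, Pi.add_apply, Pi.smul_apply,
        smul_eq_mul, Pi.zero_apply, Matrix.cons_val, Matrix.cons_val_zero, Matrix.cons_val_one] <;>
      linarith
  rw [hz]
  exact add_four_smul_mem_convexHull (zero_mem_P2 (hC0.trans hCW))
    (startup_mem_P2 hV hC0 hWC hb) (shutdown_mem_P2 hV hC0 hWC ha) (online_mem_P2 hC0 hc hd hcd)
    (by linarith) q1 hμC hμD (by ring)

lemma Q2_eq_Q2bar (h : Cmax - Cmin - V ≤ 0) : Q2 Cmin Cmax V W = Q2bar Cmin Cmax V W := by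
  ext z
  constructor
  · rintro ⟨q1, q2, q3, q4, q5, q6, q7, q8, -, -⟩
    exact ⟨q1, q2, q3, q4, q5, q6, q7, q8⟩
  · rintro ⟨q1, q2, q3, q4, q5, q6, q7, q8⟩
    have : (Cmax - Cmin - V) * (z 3 - z 4) ≤ 0 := mul_nonpos_of_nonpos_of_nonneg h (by linarith)
    exact ⟨q1, q2, q3, q4, q5, q6, q7, q8, by linarith, by linarith⟩

end Polyhedra

theorem two_period_convex_hull_general (Cmin Cmax V W : ℝ)
    (hV : 0 < V) (hC0 : 0 ≤ Cmin) (hCW : Cmin ≤ W) (hWC : W ≤ Cmax) :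
    (0 ≤ Cmax - Cmin - V →
      convexHull ℝ (P2 Cmin Cmax V W) = Q2 Cmin Cmax V W) ∧
    (Cmax - Cmin - V < 0 →
      convexHull ℝ (P2 Cmin Cmax V W) = Q2bar Cmin Cmax V W) := by
  have hull_eq : convexHull ℝ (P2 Cmin Cmax V W) = Q2 Cmin Cmax V W :=
    (convexHull_min P2_subset_Q2 convex_Q2).antisymm
      (Q2_subset_convexHull_P2 hV.le hC0 hCW hWC)
  exact ⟨fun _ => hull_eq, fun h => hull_eq.trans (Q2_eq_Q2bar h.le)⟩

theorem two_period_convex_hull (Cmin Cmax V W : ℝ)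
    (hV : 0 < V) (hC0 : 0 ≤ Cmin) (hCW : Cmin ≤ W) (hWV : W < Cmin + V) (hWC : W ≤ Cmax) :
    (0 ≤ Cmax - Cmin - V →
      convexHull ℝ (P2 Cmin Cmax V W) = Q2 Cmin Cmax V W) ∧
    (Cmax - Cmin - V < 0 →
      convexHull ℝ (P2 Cmin Cmax V W) = Q2bar Cmin Cmax V W) :=
  two_period_convex_hull_general Cmin Cmax V W hV hC0 hCW hWC
end
end

section
/- Assume Cmin ≤ W < Cmin + V, Cmax − W − V ≥ 0, and Cmax − Cmin − 2V ≥ 0. Then every point of P3[2,2] satisfies each of the ten inequalities (I1), (I2), (I3), (I4), (I5), (I6), (I7), (I8), (I9), (I10); consequently each of these inequalities is valid for conv(P3[2,2]). -/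
noncomputable section

open Set

/-- Coordinates of `z : Fin 8 → ℝ`:
`z 0 = x1`, `z 1 = x2`, `z 2 = x3`, `z 3 = y1`, `z 4 = y2`, `z 5 = y3`, `z 6 = u2`, `z 7 = u3`. -/
def Common3 (Cmin Cmax V W : ℝ) (z : Fin 8 → ℝ) : Prop :=
  0 ≤ z 0 ∧ 0 ≤ z 1 ∧ 0 ≤ z 2 ∧
  Cmin * z 3 ≤ z 0 ∧ z 0 ≤ Cmax * z 3 ∧
  Cmin * z 4 ≤ z 1 ∧ z 1 ≤ Cmax * z 4 ∧
  Cmin * z 5 ≤ z 2 ∧ z 2 ≤ Cmax * z 5 ∧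
  z 1 - z 0 ≤ V * z 3 + W * (1 - z 3) ∧
  z 2 - z 1 ≤ V * z 4 + W * (1 - z 4) ∧
  z 0 - z 1 ≤ V * z 4 + W * (1 - z 4) ∧
  z 1 - z 2 ≤ V * z 5 + W * (1 - z 5) ∧
  z 4 - z 3 ≤ z 6 ∧ z 5 - z 4 ≤ z 7

/-- The `y` and `u` coordinates are binary. -/
def Binary3 (z : Fin 8 → ℝ) : Prop :=
  (z 3 = 0 ∨ z 3 = 1) ∧ (z 4 = 0 ∨ z 4 = 1) ∧ (z 5 = 0 ∨ z 5 = 1) ∧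
  (z 6 = 0 ∨ z 6 = 1) ∧ (z 7 = 0 ∨ z 7 = 1)

/-- Three-period mixed-integer set with `L = ℓ = 2`. -/
def P3_22 (Cmin Cmax V W : ℝ) : Set (Fin 8 → ℝ) :=
  {z | Binary3 z ∧ Common3 Cmin Cmax V W z ∧ z 6 + z 7 ≤ z 5 ∧ z 3 + z 6 + z 7 ≤ 1}

/-- Three-period mixed-integer set with `L = ℓ = 1`. -/
def P3_11 (Cmin Cmax V W : ℝ) : Set (Fin 8 → ℝ) :=
  {z | Binary3 z ∧ Common3 Cmin Cmax V W z ∧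
       z 6 ≤ z 4 ∧ z 7 ≤ z 5 ∧ z 3 + z 6 ≤ 1 ∧ z 4 + z 7 ≤ 1}

/-- Three-period mixed-integer set with `L = 1`, `ℓ = 2`. -/
def P3_12 (Cmin Cmax V W : ℝ) : Set (Fin 8 → ℝ) :=
  {z | Binary3 z ∧ Common3 Cmin Cmax V W z ∧
       z 6 ≤ z 4 ∧ z 7 ≤ z 5 ∧ z 3 + z 6 + z 7 ≤ 1}

/-- Three-period mixed-integer set with `L = 2`, `ℓ = 1`. -/
def P3_21 (Cmin Cmax V W : ℝ) : Set (Fin 8 → ℝ) :=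
  {z | Binary3 z ∧ Common3 Cmin Cmax V W z ∧
       z 6 + z 7 ≤ z 5 ∧ z 3 + z 6 ≤ 1 ∧ z 4 + z 7 ≤ 1}

def Base2 (Cmin : ℝ) (z : Fin 8 → ℝ) : Prop :=
  z 6 + z 7 ≤ z 5 ∧ z 3 + z 6 + z 7 ≤ 1 ∧ z 4 - z 3 ≤ z 6 ∧ z 5 - z 4 ≤ z 7 ∧
  Cmin * z 3 ≤ z 0 ∧ Cmin * z 4 ≤ z 1 ∧ Cmin * z 5 ≤ z 2 ∧ 0 ≤ z 6 ∧ 0 ≤ z 7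

def Base1 (Cmin : ℝ) (z : Fin 8 → ℝ) : Prop :=
  z 6 ≤ z 4 ∧ z 7 ≤ z 5 ∧ z 3 + z 6 ≤ 1 ∧ z 4 + z 7 ≤ 1 ∧
  z 4 - z 3 ≤ z 6 ∧ z 5 - z 4 ≤ z 7 ∧
  Cmin * z 3 ≤ z 0 ∧ Cmin * z 4 ≤ z 1 ∧ Cmin * z 5 ≤ z 2 ∧ 0 ≤ z 6 ∧ 0 ≤ z 7

def ineqI1 (Cmin Cmax V W : ℝ) (z : Fin 8 → ℝ) : Prop :=
  z 0 ≤ W * z 3 + V * (z 4 - z 6) + (Cmax - W - V) * (z 5 - z 7 - z 6)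

def ineqI2 (Cmin Cmax V W : ℝ) (z : Fin 8 → ℝ) : Prop :=
  z 1 ≤ W * z 4 + (Cmax - W) * (z 5 - z 7 - z 6)

def ineqI3 (Cmin Cmax V W : ℝ) (z : Fin 8 → ℝ) : Prop :=
  z 2 ≤ Cmax * z 5 - (Cmax - W) * z 7 - (Cmax - W - V) * z 6

def ineqI4 (Cmin Cmax V W : ℝ) (z : Fin 8 → ℝ) : Prop :=
  z 1 - z 0 ≤ W * z 4 - Cmin * z 3 + (Cmin + V - W) * (z 5 - z 7 - z 6)

def ineqI5 (Cmin Cmax V W : ℝ) (z : Fin 8 → ℝ) : Prop :=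
  z 2 - z 1 ≤ (Cmin + V) * z 5 - Cmin * z 4 - (Cmin + V - W) * z 7

def ineqI6 (Cmin Cmax V W : ℝ) (z : Fin 8 → ℝ) : Prop :=
  z 0 - z 1 ≤ W * z 3 - (W - V) * z 4 - (Cmin + V - W) * z 6

def ineqI7 (Cmin Cmax V W : ℝ) (z : Fin 8 → ℝ) : Prop :=
  z 1 - z 2 ≤ W * z 4 - Cmin * z 5 + (Cmin + V - W) * (z 5 - z 7 - z 6)

def ineqI8 (Cmin Cmax V W : ℝ) (z : Fin 8 → ℝ) : Prop :=
  z 2 - z 0 ≤ (Cmin + 2 * V) * z 5 - Cmin * z 3 - (Cmin + 2 * V - W) * z 7 - (Cmin + V - W) * z 6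

def ineqI9 (Cmin Cmax V W : ℝ) (z : Fin 8 → ℝ) : Prop :=
  z 0 - z 2 ≤ W * z 3 - Cmin * z 5 + V * (z 4 - z 6) + (Cmin + V - W) * (z 5 - z 7 - z 6)

def ineqI10 (Cmin Cmax V W : ℝ) (z : Fin 8 → ℝ) : Prop :=
  z 0 - z 1 + z 2 ≤ W * z 3 - (W - V) * z 4 + W * z 5 + (Cmax - W) * (z 5 - z 7 - z 6)

def ineqJ1 (Cmin Cmax V W : ℝ) (z : Fin 8 → ℝ) : Prop :=
  z 0 ≤ W * z 3 + (Cmax - W) * (z 4 - z 6)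

def ineqJ2 (Cmin Cmax V W : ℝ) (z : Fin 8 → ℝ) : Prop :=
  z 0 ≤ W * z 3 + V * (z 4 - z 6) + (Cmax - W - V) * (z 5 - z 7)

def ineqJ3 (Cmin Cmax V W : ℝ) (z : Fin 8 → ℝ) : Prop :=
  z 1 ≤ Cmax * z 4 - (Cmax - W) * z 6

def ineqJ4 (Cmin Cmax V W : ℝ) (z : Fin 8 → ℝ) : Prop :=
  z 1 ≤ W * z 4 + (Cmax - W) * (z 5 - z 7)

def ineqJ5 (Cmin Cmax V W : ℝ) (z : Fin 8 → ℝ) : Prop :=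
  z 2 ≤ Cmax * z 5 - (Cmax - W) * z 7

def ineqJ6 (Cmin Cmax V W : ℝ) (z : Fin 8 → ℝ) : Prop :=
  z 2 ≤ (W + V) * z 5 - V * z 7 + (Cmax - W - V) * (z 4 - z 6)

def ineqJ7 (Cmin Cmax V W : ℝ) (z : Fin 8 → ℝ) : Prop :=
  z 1 - z 0 ≤ W * z 4 - Cmin * z 3 + (Cmin + V - W) * (z 5 - z 7)

def ineqJ8 (Cmin Cmax V W : ℝ) (z : Fin 8 → ℝ) : Prop :=
  z 1 - z 0 ≤ (Cmin + V) * z 4 - Cmin * z 3 - (Cmin + V - W) * z 6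

def ineqJ9 (Cmin Cmax V W : ℝ) (z : Fin 8 → ℝ) : Prop :=
  z 2 - z 1 ≤ (Cmin + V) * z 5 - Cmin * z 4 - (Cmin + V - W) * z 7

def ineqJ10 (Cmin Cmax V W : ℝ) (z : Fin 8 → ℝ) : Prop :=
  z 0 - z 1 ≤ W * z 3 - (W - V) * z 4 - (Cmin + V - W) * z 6

def ineqJ11 (Cmin Cmax V W : ℝ) (z : Fin 8 → ℝ) : Prop :=
  z 1 - z 2 ≤ W * z 4 - (W - V) * z 5 - (Cmin + V - W) * z 7

def ineqJ12 (Cmin Cmax V W : ℝ) (z : Fin 8 → ℝ) : Prop :=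
  z 1 - z 2 ≤ (Cmin + V) * z 4 - Cmin * z 5 - (Cmin + V - W) * z 6

def ineqJ13 (Cmin Cmax V W : ℝ) (z : Fin 8 → ℝ) : Prop :=
  z 2 - z 0 ≤ (Cmin + 2 * V) * z 5 - Cmin * z 3 - (Cmin + 2 * V - W) * z 7

def ineqJ14 (Cmin Cmax V W : ℝ) (z : Fin 8 → ℝ) : Prop :=
  z 2 - z 0 ≤ (W + V) * z 5 - V * z 7 - Cmin * z 3 + (Cmin + V - W) * (z 4 - z 6)

def ineqJ15 (Cmin Cmax V W : ℝ) (z : Fin 8 → ℝ) : Prop :=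
  z 0 - z 2 ≤ W * z 3 - Cmin * z 5 + (Cmin + 2 * V - W) * (z 4 - z 6)

def ineqJ16 (Cmin Cmax V W : ℝ) (z : Fin 8 → ℝ) : Prop :=
  z 0 - z 2 ≤ W * z 3 - Cmin * z 5 + V * (z 4 - z 6) + (Cmin + V - W) * (z 5 - z 7)

def ineqM1 (Cmin Cmax V W : ℝ) (z : Fin 8 → ℝ) : Prop :=
  (Cmax - Cmin - 2 * V) * (z 0 - W * z 3 - V * (z 4 - z 6)) ≤
    (Cmax - W - V) * (z 2 - Cmin * z 5)

def ineqM2 (Cmin Cmax V W : ℝ) (z : Fin 8 → ℝ) : Prop :=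
  (Cmax - Cmin - 2 * V) * (z 2 - (W + V) * z 5 + V * z 7) ≤
    (Cmax - W - V) * (z 0 - Cmin * z 3)

def ineqN (Cmin Cmax V W : ℝ) (z : Fin 8 → ℝ) : Prop :=
  Cmin * z 3 - (Cmin + V) * z 4 + Cmin * z 5 ≤ z 0 - z 1 + z 2

def ineqF1 (Cmin Cmax V W : ℝ) (z : Fin 8 → ℝ) : Prop :=
  z 2 - z 0 ≤ (Cmin + 2 * V) * z 5 - Cmin * z 3 - (Cmin + 2 * V - W) * z 7 +
    (Cmax - Cmin - 2 * V) * z 6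

def ineqF2 (Cmin Cmax V W : ℝ) (z : Fin 8 → ℝ) : Prop :=
  z 0 - z 2 ≤ W * z 3 + (Cmax - W) * z 4 - (Cmax - 2 * V) * z 5 -
    (Cmin + 2 * V - W) * z 6 + (Cmax - Cmin - 2 * V) * z 7

set_option maxHeartbeats 2000000 in
theorem statement_1 (Cmin Cmax V W : ℝ)
    (hV : 0 < V) (hC0 : 0 ≤ Cmin) (hCW : Cmin ≤ W) (hWC : W ≤ Cmax)
    (hWV : W < Cmin + V) (h1 : 0 ≤ Cmax - W - V) (h2 : 0 ≤ Cmax - Cmin - 2 * V) :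
    (∀ z ∈ P3_22 Cmin Cmax V W,
      ineqI1 Cmin Cmax V W z ∧ ineqI2 Cmin Cmax V W z ∧ ineqI3 Cmin Cmax V W z ∧
      ineqI4 Cmin Cmax V W z ∧ ineqI5 Cmin Cmax V W z ∧ ineqI6 Cmin Cmax V W z ∧
      ineqI7 Cmin Cmax V W z ∧ ineqI8 Cmin Cmax V W z ∧ ineqI9 Cmin Cmax V W z ∧
      ineqI10 Cmin Cmax V W z) ∧
    (∀ z ∈ convexHull ℝ (P3_22 Cmin Cmax V W),
      ineqI1 Cmin Cmax V W z ∧ ineqI2 Cmin Cmax V W z ∧ ineqI3 Cmin Cmax V W z ∧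
      ineqI4 Cmin Cmax V W z ∧ ineqI5 Cmin Cmax V W z ∧ ineqI6 Cmin Cmax V W z ∧
      ineqI7 Cmin Cmax V W z ∧ ineqI8 Cmin Cmax V W z ∧ ineqI9 Cmin Cmax V W z ∧
      ineqI10 Cmin Cmax V W z) := by
  have key : ∀ z ∈ P3_22 Cmin Cmax V W,
      ineqI1 Cmin Cmax V W z ∧ ineqI2 Cmin Cmax V W z ∧ ineqI3 Cmin Cmax V W z ∧
      ineqI4 Cmin Cmax V W z ∧ ineqI5 Cmin Cmax V W z ∧ ineqI6 Cmin Cmax V W z ∧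
      ineqI7 Cmin Cmax V W z ∧ ineqI8 Cmin Cmax V W z ∧ ineqI9 Cmin Cmax V W z ∧
      ineqI10 Cmin Cmax V W z := by
    rintro z ⟨⟨h3 | h3, h4 | h4, h5 | h5, h6 | h6, h7 | h7⟩,
      ⟨c1, c2, c3, c4, c5, c6, c7, c8, c9, c10, c11, c12, c13, c14, c15⟩, b1, b2⟩ <;>
    simp only [ineqI1, ineqI2, ineqI3, ineqI4, ineqI5, ineqI6, ineqI7, ineqI8, ineqI9,
      ineqI10, h3, h4, h5, h6, h7] at * <;>
    exact ⟨by linarith, by linarith, by linarith, by linarith, by linarith,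
      by linarith, by linarith, by linarith, by linarith, by linarith⟩
  refine ⟨key, ?_⟩
  have hS : Convex ℝ {z : Fin 8 → ℝ |
      ineqI1 Cmin Cmax V W z ∧ ineqI2 Cmin Cmax V W z ∧ ineqI3 Cmin Cmax V W z ∧
      ineqI4 Cmin Cmax V W z ∧ ineqI5 Cmin Cmax V W z ∧ ineqI6 Cmin Cmax V W z ∧
      ineqI7 Cmin Cmax V W z ∧ ineqI8 Cmin Cmax V W z ∧ ineqI9 Cmin Cmax V W z ∧
      ineqI10 Cmin Cmax V W z} := by
    rintro x ⟨hx1, hx2, hx3, hx4, hx5, hx6, hx7, hx8, hx9, hx10⟩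
      y ⟨hy1, hy2, hy3, hy4, hy5, hy6, hy7, hy8, hy9, hy10⟩ a b ha hb hab
    simp only [ineqI1, ineqI2, ineqI3, ineqI4, ineqI5, ineqI6, ineqI7, ineqI8, ineqI9,
      ineqI10, Set.mem_setOf_eq, Pi.add_apply, Pi.smul_apply, smul_eq_mul] at *
    exact ⟨by linarith [mul_le_mul_of_nonneg_left hx1 ha, mul_le_mul_of_nonneg_left hy1 hb],
      by linarith [mul_le_mul_of_nonneg_left hx2 ha, mul_le_mul_of_nonneg_left hy2 hb],
      by linarith [mul_le_mul_of_nonneg_left hx3 ha, mul_le_mul_of_nonneg_left hy3 hb],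
      by linarith [mul_le_mul_of_nonneg_left hx4 ha, mul_le_mul_of_nonneg_left hy4 hb],
      by linarith [mul_le_mul_of_nonneg_left hx5 ha, mul_le_mul_of_nonneg_left hy5 hb],
      by linarith [mul_le_mul_of_nonneg_left hx6 ha, mul_le_mul_of_nonneg_left hy6 hb],
      by linarith [mul_le_mul_of_nonneg_left hx7 ha, mul_le_mul_of_nonneg_left hy7 hb],
      by linarith [mul_le_mul_of_nonneg_left hx8 ha, mul_le_mul_of_nonneg_left hy8 hb],
      by linarith [mul_le_mul_of_nonneg_left hx9 ha, mul_le_mul_of_nonneg_left hy9 hb],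
      by linarith [mul_le_mul_of_nonneg_left hx10 ha, mul_le_mul_of_nonneg_left hy10 hb]⟩
  exact fun z hz => convexHull_min key hS hz
end
end

section
/- Assume 0 ≤ Cmin < W < Cmin + V, Cmax − W − V ≥ 0, and Cmax − Cmin − 2V ≥ 0. Define Q3_2 ⊆ ℝ^8 as the set of z = (x1,x2,x3,y1,y2,y3,u2,u3) satisfying the system Base2 together with inequalities (I1)–(I10). Then Q3_2 is full-dimensional, i.e., its affine hull is all of ℝ^8 (equivalently, Q3_2 contains 9 affinely independent points). -/
noncomputable section

open Set

/-- The polyhedron `Q3_2` given by `Base2` together with (I1)–(I10). -/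
def Q3_2 (Cmin Cmax V W : ℝ) : Set (Fin 8 → ℝ) :=
  {z | Base2 Cmin z ∧
       ineqI1 Cmin Cmax V W z ∧ ineqI2 Cmin Cmax V W z ∧ ineqI3 Cmin Cmax V W z ∧
       ineqI4 Cmin Cmax V W z ∧ ineqI5 Cmin Cmax V W z ∧ ineqI6 Cmin Cmax V W z ∧
       ineqI7 Cmin Cmax V W z ∧ ineqI8 Cmin Cmax V W z ∧ ineqI9 Cmin Cmax V W z ∧
       ineqI10 Cmin Cmax V W z}

set_option maxHeartbeats 1000000 in
theorem statement_2 (Cmin Cmax V W : ℝ)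
    (hV : 0 < V) (hC0 : 0 ≤ Cmin) (hCW : Cmin < W) (hWC : W ≤ Cmax)
    (hWV : W < Cmin + V) (h1 : 0 ≤ Cmax - W - V) (h2 : 0 ≤ Cmax - Cmin - 2 * V) :
    affineSpan ℝ (Q3_2 Cmin Cmax V W) = ⊤ := by
  have hmem : ∀ a b c d e f g h : ℝ,
      0 ≤ g → 0 ≤ h → g + h ≤ f → d + g + h ≤ 1 → e - d ≤ g → f - e ≤ h →
      Cmin * d ≤ a → Cmin * e ≤ b → Cmin * f ≤ c →
      a ≤ W * d + V * (e - g) + (Cmax - W - V) * (f - h - g) →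
      b ≤ W * e + (Cmax - W) * (f - h - g) →
      c ≤ Cmax * f - (Cmax - W) * h - (Cmax - W - V) * g →
      b - a ≤ W * e - Cmin * d + (Cmin + V - W) * (f - h - g) →
      c - b ≤ (Cmin + V) * f - Cmin * e - (Cmin + V - W) * h →
      a - b ≤ W * d - (W - V) * e - (Cmin + V - W) * g →
      b - c ≤ W * e - Cmin * f + (Cmin + V - W) * (f - h - g) →
      c - a ≤ (Cmin + 2 * V) * f - Cmin * d - (Cmin + 2 * V - W) * h - (Cmin + V - W) * g →
      a - c ≤ W * d - Cmin * f + V * (e - g) + (Cmin + V - W) * (f - h - g) →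
      a - b + c ≤ W * d - (W - V) * e + W * f + (Cmax - W) * (f - h - g) →
      (![a, b, c, d, e, f, g, h] : Fin 8 → ℝ) ∈ Q3_2 Cmin Cmax V W := by
    intro a b c d e f g h hg hh h3 h4 h5 h6 h7 h8 h9 i1 i2 i3 i4 i5 i6 i7 i8 i9 i10
    exact ⟨⟨h3, h4, h5, h6, h7, h8, h9, hg, hh⟩,
      i1, i2, i3, i4, i5, i6, i7, i8, i9, i10⟩
  set S := Q3_2 Cmin Cmax V W with hS
  have h0 : (![Cmin/2, Cmin/2, Cmin/2, 1/2, 1/2, 1/2, 1/8, 1/8] : Fin 8 → ℝ) ∈ S := by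
    apply hmem <;> linarith
  have hx1 : (![Cmin/2 + V/8, Cmin/2, Cmin/2, 1/2, 1/2, 1/2, 1/8, 1/8] : Fin 8 → ℝ) ∈ S := by
    apply hmem <;> linarith
  have hx2 : (![Cmin/2, Cmin/2 + V/8, Cmin/2, 1/2, 1/2, 1/2, 1/8, 1/8] : Fin 8 → ℝ) ∈ S := by
    apply hmem <;> linarith
  have hx3 : (![Cmin/2, Cmin/2, Cmin/2 + V/8, 1/2, 1/2, 1/2, 1/8, 1/8] : Fin 8 → ℝ) ∈ S := by
    apply hmem <;> linarith
  have hy1 : (![Cmin/2 + Cmin/8, Cmin/2, Cmin/2, 5/8, 1/2, 1/2, 1/8, 1/8] : Fin 8 → ℝ) ∈ S := by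
    apply hmem <;> linarith
  have hy2 : (![Cmin/2, Cmin/2 + Cmin/8, Cmin/2, 1/2, 5/8, 1/2, 1/8, 1/8] : Fin 8 → ℝ) ∈ S := by
    apply hmem <;> linarith
  have hy3 : (![Cmin/2, Cmin/2, Cmin/2 + Cmin/8, 1/2, 1/2, 5/8, 1/8, 1/8] : Fin 8 → ℝ) ∈ S := by
    apply hmem <;> linarith
  have hu2 : (![Cmin/2, Cmin/2, Cmin/2, 1/2, 1/2, 1/2, 0, 1/8] : Fin 8 → ℝ) ∈ S := by
    apply hmem <;> linarith
  have hu3 : (![Cmin/2, Cmin/2, Cmin/2, 1/2, 1/2, 1/2, 1/8, 0] : Fin 8 → ℝ) ∈ S := by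
    apply hmem <;> linarith
  have hVne : V ≠ 0 := ne_of_gt hV
  have e0 : (![1,0,0,0,0,0,0,0] : Fin 8 → ℝ) ∈ vectorSpan ℝ S := by
    have hm := Submodule.smul_mem (vectorSpan ℝ S) (8 / V) (vsub_mem_vectorSpan ℝ hx1 h0)
    convert hm using 1
    funext i
    simp only [vsub_eq_sub, Pi.smul_apply, Pi.sub_apply, smul_eq_mul]
    fin_cases i <;>
      norm_num [Matrix.cons_val_zero, Matrix.cons_val_one, Matrix.head_cons,
        Matrix.cons_val_succ] <;>
      field_simp
  have e1 : (![0,1,0,0,0,0,0,0] : Fin 8 → ℝ) ∈ vectorSpan ℝ S := by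
    have hm := Submodule.smul_mem (vectorSpan ℝ S) (8 / V) (vsub_mem_vectorSpan ℝ hx2 h0)
    convert hm using 1
    funext i
    simp only [vsub_eq_sub, Pi.smul_apply, Pi.sub_apply, smul_eq_mul]
    fin_cases i <;>
      norm_num [Matrix.cons_val_zero, Matrix.cons_val_one, Matrix.head_cons,
        Matrix.cons_val_succ] <;>
      field_simp
  have e2 : (![0,0,1,0,0,0,0,0] : Fin 8 → ℝ) ∈ vectorSpan ℝ S := by
    have hm := Submodule.smul_mem (vectorSpan ℝ S) (8 / V) (vsub_mem_vectorSpan ℝ hx3 h0)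
    convert hm using 1
    funext i
    simp only [vsub_eq_sub, Pi.smul_apply, Pi.sub_apply, smul_eq_mul]
    fin_cases i <;>
      norm_num [Matrix.cons_val_zero, Matrix.cons_val_one, Matrix.head_cons,
        Matrix.cons_val_succ] <;>
      field_simp
  have e3 : (![0,0,0,1,0,0,0,0] : Fin 8 → ℝ) ∈ vectorSpan ℝ S := by
    have hm := Submodule.sub_mem (vectorSpan ℝ S)
      (Submodule.smul_mem (vectorSpan ℝ S) 8 (vsub_mem_vectorSpan ℝ hy1 h0))
      (Submodule.smul_mem (vectorSpan ℝ S) Cmin e0)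
    convert hm using 1
    funext i
    simp only [vsub_eq_sub, Pi.smul_apply, Pi.sub_apply, smul_eq_mul]
    fin_cases i <;>
      norm_num [Matrix.cons_val_zero, Matrix.cons_val_one, Matrix.head_cons,
        Matrix.cons_val_succ] <;>
      ring
  have e4 : (![0,0,0,0,1,0,0,0] : Fin 8 → ℝ) ∈ vectorSpan ℝ S := by
    have hm := Submodule.sub_mem (vectorSpan ℝ S)
      (Submodule.smul_mem (vectorSpan ℝ S) 8 (vsub_mem_vectorSpan ℝ hy2 h0))
      (Submodule.smul_mem (vectorSpan ℝ S) Cmin e1)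
    convert hm using 1
    funext i
    simp only [vsub_eq_sub, Pi.smul_apply, Pi.sub_apply, smul_eq_mul]
    fin_cases i <;>
      norm_num [Matrix.cons_val_zero, Matrix.cons_val_one, Matrix.head_cons,
        Matrix.cons_val_succ] <;>
      ring
  have e5 : (![0,0,0,0,0,1,0,0] : Fin 8 → ℝ) ∈ vectorSpan ℝ S := by
    have hm := Submodule.sub_mem (vectorSpan ℝ S)
      (Submodule.smul_mem (vectorSpan ℝ S) 8 (vsub_mem_vectorSpan ℝ hy3 h0))
      (Submodule.smul_mem (vectorSpan ℝ S) Cmin e2)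
    convert hm using 1
    funext i
    simp only [vsub_eq_sub, Pi.smul_apply, Pi.sub_apply, smul_eq_mul]
    fin_cases i <;>
      norm_num [Matrix.cons_val_zero, Matrix.cons_val_one, Matrix.head_cons,
        Matrix.cons_val_succ] <;>
      ring
  have e6 : (![0,0,0,0,0,0,1,0] : Fin 8 → ℝ) ∈ vectorSpan ℝ S := by
    have hm := Submodule.smul_mem (vectorSpan ℝ S) (-8) (vsub_mem_vectorSpan ℝ hu2 h0)
    convert hm using 1
    funext i
    simp only [vsub_eq_sub, Pi.smul_apply, Pi.sub_apply, smul_eq_mul]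
    fin_cases i <;>
      norm_num [Matrix.cons_val_zero, Matrix.cons_val_one, Matrix.head_cons,
        Matrix.cons_val_succ] <;>
      ring
  have e7 : (![0,0,0,0,0,0,0,1] : Fin 8 → ℝ) ∈ vectorSpan ℝ S := by
    have hm := Submodule.smul_mem (vectorSpan ℝ S) (-8) (vsub_mem_vectorSpan ℝ hu3 h0)
    convert hm using 1
    funext i
    simp only [vsub_eq_sub, Pi.smul_apply, Pi.sub_apply, smul_eq_mul]
    fin_cases i <;>
      norm_num [Matrix.cons_val_zero, Matrix.cons_val_one, Matrix.head_cons,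
        Matrix.cons_val_succ] <;>
      ring
  have htop : vectorSpan ℝ S = ⊤ := by
    rw [eq_top_iff, ← (Pi.basisFun ℝ (Fin 8)).span_eq, Submodule.span_le]
    rintro v ⟨i, rfl⟩
    have hb : (Pi.basisFun ℝ (Fin 8)) i = Pi.single i 1 := by
      simp [Pi.basisFun_apply]
    rw [SetLike.mem_coe, hb]
    fin_cases i
    · exact (by funext j; fin_cases j <;> rfl :
        (![1,0,0,0,0,0,0,0] : Fin 8 → ℝ) = Pi.single 0 1) ▸ e0
    · exact (by funext j; fin_cases j <;> rfl :
        (![0,1,0,0,0,0,0,0] : Fin 8 → ℝ) = Pi.single 1 1) ▸ e1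
    · exact (by funext j; fin_cases j <;> rfl :
        (![0,0,1,0,0,0,0,0] : Fin 8 → ℝ) = Pi.single 2 1) ▸ e2
    · exact (by funext j; fin_cases j <;> rfl :
        (![0,0,0,1,0,0,0,0] : Fin 8 → ℝ) = Pi.single 3 1) ▸ e3
    · exact (by funext j; fin_cases j <;> rfl :
        (![0,0,0,0,1,0,0,0] : Fin 8 → ℝ) = Pi.single 4 1) ▸ e4
    · exact (by funext j; fin_cases j <;> rfl :
        (![0,0,0,0,0,1,0,0] : Fin 8 → ℝ) = Pi.single 5 1) ▸ e5
    · exact (by funext j; fin_cases j <;> rfl :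
        (![0,0,0,0,0,0,1,0] : Fin 8 → ℝ) = Pi.single 6 1) ▸ e6
    · exact (by funext j; fin_cases j <;> rfl :
        (![0,0,0,0,0,0,0,1] : Fin 8 → ℝ) = Pi.single 7 1) ▸ e7
  apply AffineSubspace.ext_of_direction_eq
  · rw [direction_affineSpan, htop, AffineSubspace.direction_top]
  · exact ⟨_, mem_affineSpan ℝ h0, trivial⟩
end
end

section
/- Assume Cmin ≤ W < Cmin + V, Cmax − W − V ≥ 0, and Cmax − Cmin − 2V ≥ 0. Define Q3_2 ⊆ ℝ^8 as the set of z satisfying the system Base2 together with inequalities (I1)–(I10). Then Q3_2 ⊆ conv(P3[2,2]), i.e., every point of Q3_2 is a convex combination of points of the mixed-integer set P3[2,2]. -/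
noncomputable section

open Set

private lemma qw_split2 (s l1 u1 l2 u2 : ℝ) (h1 : l1 ≤ u1) (h2 : l2 ≤ u2)
    (hl : l1 + l2 ≤ s) (hu : s ≤ u1 + u2) :
    ∃ a b, a + b = s ∧ l1 ≤ a ∧ a ≤ u1 ∧ l2 ≤ b ∧ b ≤ u2 := by
  rcases le_total (s - l2) u1 with h | h
  · exact ⟨s - l2, l2, by ring, by linarith, h, le_rfl, h2⟩
  · exact ⟨u1, s - u1, by ring, by linarith, le_rfl, by linarith, by linarith⟩

private lemma qw_split3 (s l1 u1 l2 u2 l3 u3 : ℝ) (h1 : l1 ≤ u1) (h2 : l2 ≤ u2) (h3 : l3 ≤ u3)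
    (hl : l1 + l2 + l3 ≤ s) (hu : s ≤ u1 + u2 + u3) :
    ∃ a b c, a + b + c = s ∧ l1 ≤ a ∧ a ≤ u1 ∧ l2 ≤ b ∧ b ≤ u2 ∧ l3 ≤ c ∧ c ≤ u3 := by
  obtain ⟨a, r, har, ha1, ha2, hr1, hr2⟩ :=
    qw_split2 s l1 u1 (l2 + l3) (u2 + u3) h1 (by linarith) (by linarith) (by linarith)
  obtain ⟨b, c, hbc, hb1, hb2, hc1, hc2⟩ := qw_split2 r l2 u2 l3 u3 h2 h3 hr1 hr2
  exact ⟨a, b, c, by linarith, ha1, ha2, hb1, hb2, hc1, hc2⟩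

/-- safe division used to disaggregate -/
private def qdv (m t A : ℝ) : ℝ := if t = 0 then m else A / t

private lemma qdv_le (m t A u : ℝ) (ht : 0 ≤ t) (hA : A ≤ t * u) (hmu : m ≤ u) :
    qdv m t A ≤ u := by
  by_cases h : t = 0
  · simp [qdv, h, hmu]
  · have ht' : 0 < t := lt_of_le_of_ne ht (Ne.symm h)
    simp only [qdv, h, if_false]
    rw [div_le_iff₀ ht']
    linarith [hA, mul_comm t u]
    
private lemma qdv_ge (m t A l : ℝ) (ht : 0 ≤ t) (hA : t * l ≤ A) (hlm : l ≤ m) :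
    l ≤ qdv m t A := by
  by_cases h : t = 0
  · simp [qdv, h, hlm]
  · have ht' : 0 < t := lt_of_le_of_ne ht (Ne.symm h)
    simp only [qdv, h, if_false]
    rw [le_div_iff₀ ht']
    linarith [mul_comm t l]

private lemma qdv_sub_le (m t A B c : ℝ) (ht : 0 ≤ t) (h : A - B ≤ t * c) (hc : 0 ≤ c) :
    qdv m t A - qdv m t B ≤ c := by
  by_cases h0 : t = 0
  · simp [qdv, h0, hc]
  · have ht' : 0 < t := lt_of_le_of_ne ht (Ne.symm h0)
    simp only [qdv, h0, if_false]
    rw [div_sub_div_same, div_le_iff₀ ht']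
    linarith [mul_comm t c]

private lemma qdv_mul (m t A l u : ℝ) (ht : 0 ≤ t) (hl : t * l ≤ A) (hu : A ≤ t * u) :
    t * qdv m t A = A := by
  by_cases h : t = 0
  · subst h; simp at hl hu ⊢; linarith
  · simp only [qdv, h, if_false]
    field_simp

private lemma vec8_0 (a0 a1 a2 a3 a4 a5 a6 a7 : ℝ) : ![a0,a1,a2,a3,a4,a5,a6,a7] 0 = a0 := rfl
private lemma vec8_1 (a0 a1 a2 a3 a4 a5 a6 a7 : ℝ) : ![a0,a1,a2,a3,a4,a5,a6,a7] 1 = a1 := rfl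
private lemma vec8_2 (a0 a1 a2 a3 a4 a5 a6 a7 : ℝ) : ![a0,a1,a2,a3,a4,a5,a6,a7] 2 = a2 := rfl
private lemma vec8_3 (a0 a1 a2 a3 a4 a5 a6 a7 : ℝ) : ![a0,a1,a2,a3,a4,a5,a6,a7] 3 = a3 := rfl
private lemma vec8_4 (a0 a1 a2 a3 a4 a5 a6 a7 : ℝ) : ![a0,a1,a2,a3,a4,a5,a6,a7] 4 = a4 := rfl
private lemma vec8_5 (a0 a1 a2 a3 a4 a5 a6 a7 : ℝ) : ![a0,a1,a2,a3,a4,a5,a6,a7] 5 = a5 := rfl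
private lemma vec8_6 (a0 a1 a2 a3 a4 a5 a6 a7 : ℝ) : ![a0,a1,a2,a3,a4,a5,a6,a7] 6 = a6 := rfl
private lemma vec8_7 (a0 a1 a2 a3 a4 a5 a6 a7 : ℝ) : ![a0,a1,a2,a3,a4,a5,a6,a7] 7 = a7 := rfl

private lemma vec6_0 {α : Type*} (a0 a1 a2 a3 a4 a5 : α) : ![a0,a1,a2,a3,a4,a5] 0 = a0 := rfl
private lemma vec6_1 {α : Type*} (a0 a1 a2 a3 a4 a5 : α) : ![a0,a1,a2,a3,a4,a5] 1 = a1 := rfl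
private lemma vec6_2 {α : Type*} (a0 a1 a2 a3 a4 a5 : α) : ![a0,a1,a2,a3,a4,a5] 2 = a2 := rfl
private lemma vec6_3 {α : Type*} (a0 a1 a2 a3 a4 a5 : α) : ![a0,a1,a2,a3,a4,a5] 3 = a3 := rfl
private lemma vec6_4 {α : Type*} (a0 a1 a2 a3 a4 a5 : α) : ![a0,a1,a2,a3,a4,a5] 4 = a4 := rfl
private lemma vec6_5 {α : Type*} (a0 a1 a2 a3 a4 a5 : α) : ![a0,a1,a2,a3,a4,a5] 5 = a5 := rfl

set_option maxHeartbeats 2000000 in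
theorem statement_3 (Cmin Cmax V W : ℝ)
    (hV : 0 < V) (hC0 : 0 ≤ Cmin) (hCW : Cmin ≤ W) (hWC : W ≤ Cmax)
    (hWV : W < Cmin + V) (h1 : 0 ≤ Cmax - W - V) (h2 : 0 ≤ Cmax - Cmin - 2 * V) :
    Q3_2 Cmin Cmax V W ⊆ convexHull ℝ (P3_22 Cmin Cmax V W) := by
  intro z hz
  simp only [Q3_2, Base2, ineqI1, ineqI2, ineqI3, ineqI4, ineqI5, ineqI6, ineqI7, ineqI8,
    ineqI9, ineqI10, Set.mem_setOf_eq] at hz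
  obtain ⟨⟨hb1, hb2, hb3, hb4, hb5, hb6, hb7, hb8, hb9⟩,
    hI1, hI2, hI3, hI4, hI5, hI6, hI7, hI8, hI9, hI10⟩ := hz
  have hbb0 : (0:ℝ) ≤ (z 3 - z 4 + z 6) := by linarith
  have hgg0 : (0:ℝ) ≤ (z 4 - z 5 + z 7) := by linarith
  have hdd0 : (0:ℝ) ≤ (z 5 - z 6 - z 7) := by linarith
  have haa0 : (0:ℝ) ≤ 1 - z 3 - z 6 - z 7 := by linarith
  have hpbm : (0:ℝ) ≤ (z 3 - z 4 + z 6) * Cmin := mul_nonneg hbb0 (by linarith : (0:ℝ) ≤ Cmin)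
  have hpbv : (0:ℝ) ≤ (z 3 - z 4 + z 6) * V := mul_nonneg hbb0 (le_of_lt hV)
  have hpbw : (0:ℝ) ≤ (z 3 - z 4 + z 6) * (W - Cmin) := mul_nonneg hbb0 (by linarith : (0:ℝ) ≤ W - Cmin)
  have hpbx : (0:ℝ) ≤ (z 3 - z 4 + z 6) * (Cmax - W - V) := mul_nonneg hbb0 (by linarith : (0:ℝ) ≤ Cmax - W - V)
  have hpby : (0:ℝ) ≤ (z 3 - z 4 + z 6) * (Cmin + V - W) := mul_nonneg hbb0 (by linarith : (0:ℝ) ≤ Cmin + V - W)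
  have hpgm : (0:ℝ) ≤ (z 4 - z 5 + z 7) * Cmin := mul_nonneg hgg0 (by linarith : (0:ℝ) ≤ Cmin)
  have hpgv : (0:ℝ) ≤ (z 4 - z 5 + z 7) * V := mul_nonneg hgg0 (le_of_lt hV)
  have hpgw : (0:ℝ) ≤ (z 4 - z 5 + z 7) * (W - Cmin) := mul_nonneg hgg0 (by linarith : (0:ℝ) ≤ W - Cmin)
  have hpgx : (0:ℝ) ≤ (z 4 - z 5 + z 7) * (Cmax - W - V) := mul_nonneg hgg0 (by linarith : (0:ℝ) ≤ Cmax - W - V)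
  have hpgy : (0:ℝ) ≤ (z 4 - z 5 + z 7) * (Cmin + V - W) := mul_nonneg hgg0 (by linarith : (0:ℝ) ≤ Cmin + V - W)
  have hpdm : (0:ℝ) ≤ (z 5 - z 6 - z 7) * Cmin := mul_nonneg hdd0 (by linarith : (0:ℝ) ≤ Cmin)
  have hpdv : (0:ℝ) ≤ (z 5 - z 6 - z 7) * V := mul_nonneg hdd0 (le_of_lt hV)
  have hpdw : (0:ℝ) ≤ (z 5 - z 6 - z 7) * (W - Cmin) := mul_nonneg hdd0 (by linarith : (0:ℝ) ≤ W - Cmin)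
  have hpdx : (0:ℝ) ≤ (z 5 - z 6 - z 7) * (Cmax - W - V) := mul_nonneg hdd0 (by linarith : (0:ℝ) ≤ Cmax - W - V)
  have hpdy : (0:ℝ) ≤ (z 5 - z 6 - z 7) * (Cmin + V - W) := mul_nonneg hdd0 (by linarith : (0:ℝ) ≤ Cmin + V - W)
  have hpem : (0:ℝ) ≤ (z 6) * Cmin := mul_nonneg hb8 (by linarith : (0:ℝ) ≤ Cmin)
  have hpev : (0:ℝ) ≤ (z 6) * V := mul_nonneg hb8 (le_of_lt hV)
  have hpew : (0:ℝ) ≤ (z 6) * (W - Cmin) := mul_nonneg hb8 (by linarith : (0:ℝ) ≤ W - Cmin)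
  have hpex : (0:ℝ) ≤ (z 6) * (Cmax - W - V) := mul_nonneg hb8 (by linarith : (0:ℝ) ≤ Cmax - W - V)
  have hpey : (0:ℝ) ≤ (z 6) * (Cmin + V - W) := mul_nonneg hb8 (by linarith : (0:ℝ) ≤ Cmin + V - W)
  have hpfm : (0:ℝ) ≤ (z 7) * Cmin := mul_nonneg hb9 (by linarith : (0:ℝ) ≤ Cmin)
  have hpfv : (0:ℝ) ≤ (z 7) * V := mul_nonneg hb9 (le_of_lt hV)
  have hpfw : (0:ℝ) ≤ (z 7) * (W - Cmin) := mul_nonneg hb9 (by linarith : (0:ℝ) ≤ W - Cmin)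
  have hpfx : (0:ℝ) ≤ (z 7) * (Cmax - W - V) := mul_nonneg hb9 (by linarith : (0:ℝ) ≤ Cmax - W - V)
  have hpfy : (0:ℝ) ≤ (z 7) * (Cmin + V - W) := mul_nonneg hb9 (by linarith : (0:ℝ) ≤ Cmin + V - W)

  set DD := max (max ((z 5 - z 6 - z 7)*Cmin) (z 1 - ((z 4 - z 5 + z 7) + z 6)*W))
      (max (max (z 0 - (z 3 - z 4 + z 6)*W - (z 4 - z 5 + z 7)*(W+V) - (z 5 - z 6 - z 7)*V) (z 2 - z 7*W - z 6*(W+V) - (z 5 - z 6 - z 7)*V))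
           (z 0 + z 2 - z 1 - (z 3 - z 4 + z 6)*W - (z 4 - z 5 + z 7)*V - z 6*V - z 7*W - 2*((z 5 - z 6 - z 7)*V))) with hDDd
  have hDl1 : (z 5 - z 6 - z 7)*Cmin ≤ DD := le_max_of_le_left (le_max_left _ _)
  have hDl2 : z 1 - ((z 4 - z 5 + z 7) + z 6)*W ≤ DD := le_max_of_le_left (le_max_right _ _)
  have hDl3 : z 0 - (z 3 - z 4 + z 6)*W - (z 4 - z 5 + z 7)*(W+V) - (z 5 - z 6 - z 7)*V ≤ DD :=
    le_max_of_le_right (le_max_of_le_left (le_max_left _ _))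
  have hDl4 : z 2 - z 7*W - z 6*(W+V) - (z 5 - z 6 - z 7)*V ≤ DD :=
    le_max_of_le_right (le_max_of_le_left (le_max_right _ _))
  have hDl5 : z 0 + z 2 - z 1 - (z 3 - z 4 + z 6)*W - (z 4 - z 5 + z 7)*V - z 6*V - z 7*W - 2*((z 5 - z 6 - z 7)*V) ≤ DD :=
    le_max_of_le_right (le_max_right _ _)
  have hDu1 : DD ≤ (z 5 - z 6 - z 7)*Cmax := by
    rw [hDDd]; refine max_le (max_le ?_ ?_) (max_le (max_le ?_ ?_) ?_) <;> linarith
  have hDu2 : DD ≤ z 0 - ((z 3 - z 4 + z 6) + (z 4 - z 5 + z 7))*Cmin + (z 5 - z 6 - z 7)*V := by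
    rw [hDDd]; refine max_le (max_le ?_ ?_) (max_le (max_le ?_ ?_) ?_) <;> linarith
  have hDu3 : DD ≤ z 2 - (z 6 + z 7)*Cmin + (z 5 - z 6 - z 7)*V := by
    rw [hDDd]; refine max_le (max_le ?_ ?_) (max_le (max_le ?_ ?_) ?_) <;> linarith
  have hDu4 : DD ≤ z 1 - ((z 4 - z 5 + z 7) + z 6)*Cmin := by
    rw [hDDd]; refine max_le (max_le ?_ ?_) (max_le (max_le ?_ ?_) ?_) <;> linarith
  have hDu5 : DD ≤ 2*((z 5 - z 6 - z 7)*Cmax) - (z 0 + z 2 - z 1 - (z 3 - z 4 + z 6)*W - (z 4 - z 5 + z 7)*V - z 6*V - z 7*W) := by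
    rw [hDDd]; refine max_le (max_le ?_ ?_) (max_le (max_le ?_ ?_) ?_) <;> linarith
  have hDu6 : DD ≤ (z 5 - z 6 - z 7)*Cmax - (z 0 - z 1 - (z 3 - z 4 + z 6)*W - (z 4 - z 5 + z 7)*V + z 6*Cmin) := by
    rw [hDDd]; refine max_le (max_le ?_ ?_) (max_le (max_le ?_ ?_) ?_) <;> linarith
  have hDu7 : DD ≤ (z 5 - z 6 - z 7)*Cmax - (z 2 - z 1 - z 7*W - z 6*V + (z 4 - z 5 + z 7)*Cmin) := by
    rw [hDDd]; refine max_le (max_le ?_ ?_) (max_le (max_le ?_ ?_) ?_) <;> linarith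
  clear hDDd
  set hh := min ((z 5 - z 6 - z 7)*Cmax) (DD + (z 5 - z 6 - z 7)*V) with hhd
  have hhle1 : hh ≤ (z 5 - z 6 - z 7)*Cmax := min_le_left _ _
  have hhle2 : hh ≤ DD + (z 5 - z 6 - z 7)*V := min_le_right _ _
  have hhge1 : z 0 - (z 3 - z 4 + z 6)*W - (z 4 - z 5 + z 7)*(W+V) ≤ hh := le_min (by linarith) (by linarith)
  have hhge3 : z 2 - z 7*W - z 6*(W+V) ≤ hh := le_min (by linarith) (by linarith)
  have f2b : z 0 - z 1 - (z 3 - z 4 + z 6)*W - (z 4 - z 5 + z 7)*V + z 6*Cmin ≤ hh - DD := by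
    rcases min_cases ((z 5 - z 6 - z 7)*Cmax) (DD + (z 5 - z 6 - z 7)*V) with ⟨he, _⟩ | ⟨he, _⟩ <;> rw [hhd, he] <;> linarith
  have f4b : z 2 - z 1 - z 7*W - z 6*V + (z 4 - z 5 + z 7)*Cmin ≤ hh - DD := by
    rcases min_cases ((z 5 - z 6 - z 7)*Cmax) (DD + (z 5 - z 6 - z 7)*V) with ⟨he, _⟩ | ⟨he, _⟩ <;> rw [hhd, he] <;> linarith
  have f24 : z 0 + z 2 - z 1 - (z 3 - z 4 + z 6)*W - (z 4 - z 5 + z 7)*V - z 6*V - z 7*W ≤ 2*hh - DD := by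
    rcases min_cases ((z 5 - z 6 - z 7)*Cmax) (DD + (z 5 - z 6 - z 7)*V) with ⟨he, _⟩ | ⟨he, _⟩ <;> rw [hhd, he] <;> linarith
  clear hhd
  set gg := max ((z 5 - z 6 - z 7)*Cmin) (DD - (z 5 - z 6 - z 7)*V) with hggd
  have ggl1 : (z 5 - z 6 - z 7)*Cmin ≤ gg := le_max_left _ _
  have ggl2 : DD - (z 5 - z 6 - z 7)*V ≤ gg := le_max_right _ _
  have ggh : gg ≤ hh := by
    rw [hggd]; refine max_le (le_min ?_ ?_) (le_min ?_ ?_) <;> linarith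
  have ggA1 : gg ≤ z 0 - ((z 3 - z 4 + z 6) + (z 4 - z 5 + z 7))*Cmin := by
    rw [hggd]; refine max_le ?_ ?_ <;> linarith
  have ggA3 : gg ≤ z 2 - (z 6 + z 7)*Cmin := by
    rw [hggd]; refine max_le ?_ ?_ <;> linarith
  clear hggd
  set C2 := max (max ((z 4 - z 5 + z 7)*Cmin) (z 0 - (z 3 - z 4 + z 6)*W - (z 4 - z 5 + z 7)*V - hh)) (z 1 - DD - z 6*W) with hC2d
  have hC2l1 : (z 4 - z 5 + z 7)*Cmin ≤ C2 := le_max_of_le_left (le_max_left _ _)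
  have hC2l2 : z 0 - (z 3 - z 4 + z 6)*W - (z 4 - z 5 + z 7)*V - hh ≤ C2 := le_max_of_le_left (le_max_right _ _)
  have hC2l3 : z 1 - DD - z 6*W ≤ C2 := le_max_right _ _
  have hC2u1 : C2 ≤ (z 4 - z 5 + z 7)*W := by
    rw [hC2d]; refine max_le (max_le ?_ ?_) ?_ <;> linarith
  have hC2u2 : C2 ≤ z 1 - DD - z 6*Cmin := by
    rw [hC2d]; refine max_le (max_le ?_ ?_) ?_ <;> linarith
  have hC2u3 : C2 ≤ z 1 - DD - z 2 + z 7*W + z 6*V + hh := by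
    rw [hC2d]; refine max_le (max_le ?_ ?_) ?_ <;> linarith
  clear hC2d
  set E2 := z 1 - DD - C2 with hE2d
  have hE2l : z 6*Cmin ≤ E2 := by rw [hE2d]; linarith
  have hE2u : E2 ≤ z 6*W := by rw [hE2d]; linarith
  have hE2r : z 2 - z 7*W - z 6*V - hh ≤ E2 := by rw [hE2d]; linarith
  have hE2s : C2 + DD + E2 = z 1 := by rw [hE2d]; ring
  clear hE2d
  obtain ⟨B1, C1, D1, hs1, hB1l, hB1u, hC1l, hC1u, hD1l, hD1u⟩ :=
    qw_split3 (z 0) ((z 3 - z 4 + z 6)*Cmin) ((z 3 - z 4 + z 6)*W) ((z 4 - z 5 + z 7)*Cmin) (C2 + (z 4 - z 5 + z 7)*V) gg hh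
      (by linarith) (by linarith) ggh (by linarith) (by linarith)
  obtain ⟨F3, E3, D3, hs3, hF3l, hF3u, hE3l, hE3u, hD3l, hD3u⟩ :=
    qw_split3 (z 2) (z 7*Cmin) (z 7*W) (z 6*Cmin) (E2 + z 6*V) gg hh
      (by linarith) (by linarith) ggh (by linarith) (by linarith)
  
  -- scalar bounds for disaggregated values
  have hxBl : Cmin ≤ qdv Cmin (z 3 - z 4 + z 6) B1 := qdv_ge _ _ _ _ hbb0 hB1l le_rfl
  have hxBu : qdv Cmin (z 3 - z 4 + z 6) B1 ≤ W := qdv_le _ _ _ _ hbb0 hB1u hCW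
  have hxC1l : Cmin ≤ qdv Cmin (z 4 - z 5 + z 7) C1 := qdv_ge _ _ _ _ hgg0 hC1l le_rfl
  have hxC1u : qdv Cmin (z 4 - z 5 + z 7) C1 ≤ W + V := qdv_le _ _ _ _ hgg0 (by linarith) (by linarith)
  have hxC2l : Cmin ≤ qdv Cmin (z 4 - z 5 + z 7) C2 := qdv_ge _ _ _ _ hgg0 hC2l1 le_rfl
  have hxC2u : qdv Cmin (z 4 - z 5 + z 7) C2 ≤ W := qdv_le _ _ _ _ hgg0 hC2u1 hCW
  have hxC12 : qdv Cmin (z 4 - z 5 + z 7) C1 - qdv Cmin (z 4 - z 5 + z 7) C2 ≤ V := qdv_sub_le _ _ _ _ _ hgg0 (by linarith) (le_of_lt hV)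
  have hxC21 : qdv Cmin (z 4 - z 5 + z 7) C2 - qdv Cmin (z 4 - z 5 + z 7) C1 ≤ V := qdv_sub_le _ _ _ _ _ hgg0 (by linarith) (le_of_lt hV)
  have hxD1l : Cmin ≤ qdv Cmin (z 5 - z 6 - z 7) D1 := qdv_ge _ _ _ _ hdd0 (by linarith) le_rfl
  have hxD1u : qdv Cmin (z 5 - z 6 - z 7) D1 ≤ Cmax := qdv_le _ _ _ _ hdd0 (by linarith) (by linarith)
  have hxD2l : Cmin ≤ qdv Cmin (z 5 - z 6 - z 7) DD := qdv_ge _ _ _ _ hdd0 hDl1 le_rfl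
  have hxD2u : qdv Cmin (z 5 - z 6 - z 7) DD ≤ Cmax := qdv_le _ _ _ _ hdd0 hDu1 (by linarith)
  have hxD3l : Cmin ≤ qdv Cmin (z 5 - z 6 - z 7) D3 := qdv_ge _ _ _ _ hdd0 (by linarith) le_rfl
  have hxD3u : qdv Cmin (z 5 - z 6 - z 7) D3 ≤ Cmax := qdv_le _ _ _ _ hdd0 (by linarith) (by linarith)
  have hxD12 : qdv Cmin (z 5 - z 6 - z 7) D1 - qdv Cmin (z 5 - z 6 - z 7) DD ≤ V := qdv_sub_le _ _ _ _ _ hdd0 (by linarith) (le_of_lt hV)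
  have hxD21 : qdv Cmin (z 5 - z 6 - z 7) DD - qdv Cmin (z 5 - z 6 - z 7) D1 ≤ V := qdv_sub_le _ _ _ _ _ hdd0 (by linarith) (le_of_lt hV)
  have hxD32 : qdv Cmin (z 5 - z 6 - z 7) D3 - qdv Cmin (z 5 - z 6 - z 7) DD ≤ V := qdv_sub_le _ _ _ _ _ hdd0 (by linarith) (le_of_lt hV)
  have hxD23 : qdv Cmin (z 5 - z 6 - z 7) DD - qdv Cmin (z 5 - z 6 - z 7) D3 ≤ V := qdv_sub_le _ _ _ _ _ hdd0 (by linarith) (le_of_lt hV)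
  have hxE2l : Cmin ≤ qdv Cmin (z 6) E2 := qdv_ge _ _ _ _ hb8 hE2l le_rfl
  have hxE2u : qdv Cmin (z 6) E2 ≤ W := qdv_le _ _ _ _ hb8 hE2u hCW
  have hxE3l : Cmin ≤ qdv Cmin (z 6) E3 := qdv_ge _ _ _ _ hb8 hE3l le_rfl
  have hxE3u : qdv Cmin (z 6) E3 ≤ W + V := qdv_le _ _ _ _ hb8 (by linarith) (by linarith)
  have hxE32 : qdv Cmin (z 6) E3 - qdv Cmin (z 6) E2 ≤ V := qdv_sub_le _ _ _ _ _ hb8 (by linarith) (le_of_lt hV)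
  have hxE23 : qdv Cmin (z 6) E2 - qdv Cmin (z 6) E3 ≤ V := qdv_sub_le _ _ _ _ _ hb8 (by linarith) (le_of_lt hV)
  have hxFl : Cmin ≤ qdv Cmin (z 7) F3 := qdv_ge _ _ _ _ hb9 hF3l le_rfl
  have hxFu : qdv Cmin (z 7) F3 ≤ W := qdv_le _ _ _ _ hb9 hF3u hCW
  -- aggregation identities
  have eB : (z 3 - z 4 + z 6) * qdv Cmin (z 3 - z 4 + z 6) B1 = B1 := qdv_mul _ _ _ Cmin W hbb0 hB1l hB1u
  have eC1 : (z 4 - z 5 + z 7) * qdv Cmin (z 4 - z 5 + z 7) C1 = C1 := qdv_mul _ _ _ Cmin (W+V) hgg0 hC1l (by linarith)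
  have eC2 : (z 4 - z 5 + z 7) * qdv Cmin (z 4 - z 5 + z 7) C2 = C2 := qdv_mul _ _ _ Cmin W hgg0 hC2l1 hC2u1
  have eD1 : (z 5 - z 6 - z 7) * qdv Cmin (z 5 - z 6 - z 7) D1 = D1 := qdv_mul _ _ _ Cmin Cmax hdd0 (by linarith) (by linarith)
  have eD2 : (z 5 - z 6 - z 7) * qdv Cmin (z 5 - z 6 - z 7) DD = DD := qdv_mul _ _ _ Cmin Cmax hdd0 hDl1 hDu1
  have eD3 : (z 5 - z 6 - z 7) * qdv Cmin (z 5 - z 6 - z 7) D3 = D3 := qdv_mul _ _ _ Cmin Cmax hdd0 (by linarith) (by linarith)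
  have eE2 : z 6 * qdv Cmin (z 6) E2 = E2 := qdv_mul _ _ _ Cmin W hb8 hE2l hE2u
  have eE3 : z 6 * qdv Cmin (z 6) E3 = E3 := qdv_mul _ _ _ Cmin (W+V) hb8 hE3l (by linarith)
  have eF3 : z 7 * qdv Cmin (z 7) F3 = F3 := qdv_mul _ _ _ Cmin W hb9 hF3l hF3u
  -- the six points
  set pA : Fin 8 → ℝ := ![0, 0, 0, 0, 0, 0, 0, 0] with hpA
  set pB : Fin 8 → ℝ := ![qdv Cmin (z 3 - z 4 + z 6) B1, 0, 0, 1, 0, 0, 0, 0] with hpB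
  set pC : Fin 8 → ℝ := ![qdv Cmin (z 4 - z 5 + z 7) C1, qdv Cmin (z 4 - z 5 + z 7) C2, 0, 1, 1, 0, 0, 0] with hpC
  set pD : Fin 8 → ℝ := ![qdv Cmin (z 5 - z 6 - z 7) D1, qdv Cmin (z 5 - z 6 - z 7) DD, qdv Cmin (z 5 - z 6 - z 7) D3, 1, 1, 1, 0, 0] with hpD
  set pE : Fin 8 → ℝ := ![0, qdv Cmin (z 6) E2, qdv Cmin (z 6) E3, 0, 1, 1, 1, 0] with hpE
  set pF : Fin 8 → ℝ := ![0, 0, qdv Cmin (z 7) F3, 0, 0, 1, 0, 1] with hpF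
  have memA : pA ∈ P3_22 Cmin Cmax V W := by
    rw [hpA]
    refine ⟨⟨Or.inl rfl, Or.inl rfl, Or.inl rfl, Or.inl rfl, Or.inl rfl⟩, ?_, ?_, ?_⟩
    · simp only [Common3, vec8_0, vec8_1, vec8_2, vec8_3, vec8_4, vec8_5, vec8_6, vec8_7]
      refine ⟨?_, ?_, ?_, ?_, ?_, ?_, ?_, ?_, ?_, ?_, ?_, ?_, ?_, ?_, ?_⟩ <;> linarith
    · simp only [vec8_5, vec8_6, vec8_7]; linarith
    · simp only [vec8_3, vec8_6, vec8_7]; linarith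
  have memB : pB ∈ P3_22 Cmin Cmax V W := by
    rw [hpB]
    refine ⟨⟨Or.inr rfl, Or.inl rfl, Or.inl rfl, Or.inl rfl, Or.inl rfl⟩, ?_, ?_, ?_⟩
    · simp only [Common3, vec8_0, vec8_1, vec8_2, vec8_3, vec8_4, vec8_5, vec8_6, vec8_7]
      refine ⟨?_, ?_, ?_, ?_, ?_, ?_, ?_, ?_, ?_, ?_, ?_, ?_, ?_, ?_, ?_⟩ <;> linarith
    · simp only [vec8_5, vec8_6, vec8_7]; linarith
    · simp only [vec8_3, vec8_6, vec8_7]; linarith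
  have memC : pC ∈ P3_22 Cmin Cmax V W := by
    rw [hpC]
    refine ⟨⟨Or.inr rfl, Or.inr rfl, Or.inl rfl, Or.inl rfl, Or.inl rfl⟩, ?_, ?_, ?_⟩
    · simp only [Common3, vec8_0, vec8_1, vec8_2, vec8_3, vec8_4, vec8_5, vec8_6, vec8_7]
      refine ⟨?_, ?_, ?_, ?_, ?_, ?_, ?_, ?_, ?_, ?_, ?_, ?_, ?_, ?_, ?_⟩ <;> linarith
    · simp only [vec8_5, vec8_6, vec8_7]; linarith
    · simp only [vec8_3, vec8_6, vec8_7]; linarith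
  have memD : pD ∈ P3_22 Cmin Cmax V W := by
    rw [hpD]
    refine ⟨⟨Or.inr rfl, Or.inr rfl, Or.inr rfl, Or.inl rfl, Or.inl rfl⟩, ?_, ?_, ?_⟩
    · simp only [Common3, vec8_0, vec8_1, vec8_2, vec8_3, vec8_4, vec8_5, vec8_6, vec8_7]
      refine ⟨?_, ?_, ?_, ?_, ?_, ?_, ?_, ?_, ?_, ?_, ?_, ?_, ?_, ?_, ?_⟩ <;> linarith
    · simp only [vec8_5, vec8_6, vec8_7]; linarith
    · simp only [vec8_3, vec8_6, vec8_7]; linarith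
  have memE : pE ∈ P3_22 Cmin Cmax V W := by
    rw [hpE]
    refine ⟨⟨Or.inl rfl, Or.inr rfl, Or.inr rfl, Or.inr rfl, Or.inl rfl⟩, ?_, ?_, ?_⟩
    · simp only [Common3, vec8_0, vec8_1, vec8_2, vec8_3, vec8_4, vec8_5, vec8_6, vec8_7]
      refine ⟨?_, ?_, ?_, ?_, ?_, ?_, ?_, ?_, ?_, ?_, ?_, ?_, ?_, ?_, ?_⟩ <;> linarith
    · simp only [vec8_5, vec8_6, vec8_7]; linarith
    · simp only [vec8_3, vec8_6, vec8_7]; linarith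
  have memF : pF ∈ P3_22 Cmin Cmax V W := by
    rw [hpF]
    refine ⟨⟨Or.inl rfl, Or.inl rfl, Or.inr rfl, Or.inl rfl, Or.inr rfl⟩, ?_, ?_, ?_⟩
    · simp only [Common3, vec8_0, vec8_1, vec8_2, vec8_3, vec8_4, vec8_5, vec8_6, vec8_7]
      refine ⟨?_, ?_, ?_, ?_, ?_, ?_, ?_, ?_, ?_, ?_, ?_, ?_, ?_, ?_, ?_⟩ <;> linarith
    · simp only [vec8_5, vec8_6, vec8_7]; linarith
    · simp only [vec8_3, vec8_6, vec8_7]; linarith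
  -- weights
  set w : Fin 6 → ℝ := ![1 - z 3 - z 6 - z 7, (z 3 - z 4 + z 6), (z 4 - z 5 + z 7), (z 5 - z 6 - z 7), z 6, z 7] with hwd
  set p : Fin 6 → Fin 8 → ℝ := ![pA, pB, pC, pD, pE, pF] with hpd
  have hw0 : ∀ i ∈ (Finset.univ : Finset (Fin 6)), 0 ≤ w i := by
    intro i _; fin_cases i
    exacts [haa0, hbb0, hgg0, hdd0, hb8, hb9]
  have hp0 : ∀ i ∈ (Finset.univ : Finset (Fin 6)), p i ∈ P3_22 Cmin Cmax V W := by
    intro i _; fin_cases i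
    exacts [memA, memB, memC, memD, memE, memF]
  have hws : ∑ i : Fin 6, w i = 1 := by
    rw [Fin.sum_univ_six, hwd]
    simp only [vec6_0, vec6_1, vec6_2, vec6_3, vec6_4, vec6_5]; ring
  have key : ∀ j : Fin 8, (∑ i : Fin 6, w i • p i) j =
      w 0 * p 0 j + w 1 * p 1 j + w 2 * p 2 j + w 3 * p 3 j + w 4 * p 4 j + w 5 * p 5 j := by
    intro j
    rw [Finset.sum_apply, Fin.sum_univ_six]
    simp only [Pi.smul_apply, smul_eq_mul]
  have hc0 : z 0 = (∑ i : Fin 6, w i • p i) 0 := by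
    rw [key 0, hwd, hpd]
    simp only [vec6_0, vec6_1, vec6_2, vec6_3, vec6_4, vec6_5, hpA, hpB, hpC, hpD, hpE, hpF,
      vec8_0]
    linarith [eB, eC1, eD1]
  have hc1 : z 1 = (∑ i : Fin 6, w i • p i) 1 := by
    rw [key 1, hwd, hpd]
    simp only [vec6_0, vec6_1, vec6_2, vec6_3, vec6_4, vec6_5, hpA, hpB, hpC, hpD, hpE, hpF,
      vec8_1]
    linarith [eC2, eD2, eE2]
  have hc2 : z 2 = (∑ i : Fin 6, w i • p i) 2 := by
    rw [key 2, hwd, hpd]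
    simp only [vec6_0, vec6_1, vec6_2, vec6_3, vec6_4, vec6_5, hpA, hpB, hpC, hpD, hpE, hpF,
      vec8_2]
    linarith [eD3, eE3, eF3]
  have hc3 : z 3 = (∑ i : Fin 6, w i • p i) 3 := by
    rw [key 3, hwd, hpd]
    simp only [vec6_0, vec6_1, vec6_2, vec6_3, vec6_4, vec6_5, hpA, hpB, hpC, hpD, hpE, hpF,
      vec8_3]
    ring
  have hc4 : z 4 = (∑ i : Fin 6, w i • p i) 4 := by
    rw [key 4, hwd, hpd]
    simp only [vec6_0, vec6_1, vec6_2, vec6_3, vec6_4, vec6_5, hpA, hpB, hpC, hpD, hpE, hpF,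
      vec8_4]
    ring
  have hc5 : z 5 = (∑ i : Fin 6, w i • p i) 5 := by
    rw [key 5, hwd, hpd]
    simp only [vec6_0, vec6_1, vec6_2, vec6_3, vec6_4, vec6_5, hpA, hpB, hpC, hpD, hpE, hpF,
      vec8_5]
    ring
  have hc6 : z 6 = (∑ i : Fin 6, w i • p i) 6 := by
    rw [key 6, hwd, hpd]
    simp only [vec6_0, vec6_1, vec6_2, vec6_3, vec6_4, vec6_5, hpA, hpB, hpC, hpD, hpE, hpF,
      vec8_6]
    ring
  have hc7 : z 7 = (∑ i : Fin 6, w i • p i) 7 := by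
    rw [key 7, hwd, hpd]
    simp only [vec6_0, vec6_1, vec6_2, vec6_3, vec6_4, vec6_5, hpA, hpB, hpC, hpD, hpE, hpF,
      vec8_7]
    ring
  have hmem := Finset.centerMass_mem_convexHull Finset.univ hw0
    (by rw [hws]; norm_num) hp0
  rw [Finset.centerMass_eq_of_sum_1 _ _ hws] at hmem
  have hzeq : z = ∑ i : Fin 6, w i • p i := by
    funext j; fin_cases j
    exacts [hc0, hc1, hc2, hc3, hc4, hc5, hc6, hc7]
  rw [hzeq]; exact hmem
end
end
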